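/- Let C ≤ SL_3(R) be the group of positive diagonal matrices and let P_n be the matrix with rows (1, 0, n), (0, 1, n), (0, 0, 1). Then P_n C P_n^{-1} converges, as n → ∞, to the group N_3 = { matrices with rows (1, 0, t), (0, 1, s), (0, 0, 1) : s, t ∈ R }. -/

import Mathlib

open Filter Topology Matrix

/-- Convergence of a sequence of subsets (subgroups) of a topological space:
(a) every element of `L` is a limit of a sequence with `n`-th term in `H n`;
(b) every subsequential limit of such sequences lies in `L`. -/
def SubgroupConverges {M : Type*} [TopologicalSpace M]
    (H : ℕ → Set M) (L : Set M) : Prop :=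
  (∀ l ∈ L, ∃ h : ℕ → M, (∀ n, h n ∈ H n) ∧ Tendsto h atTop (𝓝 l)) ∧
  (∀ h : ℕ → M, (∀ n, h n ∈ H n) → ∀ φ : ℕ → ℕ, StrictMono φ → ∀ l : M,
    Tendsto (h ∘ φ) atTop (𝓝 l) → l ∈ L)

/-- The positive diagonal Cartan subgroup of SL₃(ℝ), as a set of matrices. -/
def CartanC : Set (Matrix (Fin 3) (Fin 3) ℝ) :=
  {M | ∃ a b : ℝ, 0 < a ∧ 0 < b ∧ M = Matrix.diagonal ![a, b, 1 / (a * b)]}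

noncomputable def P3 (n : ℕ) : Matrix (Fin 3) (Fin 3) ℝ :=
  !![1, 0, (n : ℝ); 0, 1, (n : ℝ); 0, 0, 1]

def groupN3 : Set (Matrix (Fin 3) (Fin 3) ℝ) :=
  {M | ∃ s t : ℝ, M = !![1, 0, t; 0, 1, s; 0, 0, 1]}

/-!
Conjugating `diag(a, b, c)` by `P_n` gives the upper triangular matrix with diagonal `(a, b, c)`
and last column `(n (c - a), n (c - b), c)`. Along a convergent subsequence that column stays
bounded while `n → ∞`, so `c - a → 0` and `c - b → 0`; with `abc = 1` the common limit of the
diagonal is a real cube root of `1`, hence `1`, and the limit lies in `N₃`. Conversely the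
choice `a = e^{α/n}`, `b = e^{β/n}`, `c = e^{γ/n}` with `α + β + γ = 0` has determinant `1` and
last column tending to `(γ - α, γ - β)` because `n (e^{w/n} - 1) → w`; every point of `N₃`
arises this way.
-/

def conjDiagonal (x a b c : ℝ) : Matrix (Fin 3) (Fin 3) ℝ :=
  !![a, 0, x * (c - a); 0, b, x * (c - b); 0, 0, c]

lemma P3_inv (n : ℕ) : (P3 n)⁻¹ = !![1, 0, -(n : ℝ); 0, 1, -(n : ℝ); 0, 0, 1] :=
  Matrix.inv_eq_right_inv (by simp [P3, Matrix.one_fin_three])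

lemma P3_mul_diagonal_mul_inv (n : ℕ) (a b c : ℝ) :
    P3 n * diagonal ![a, b, c] * (P3 n)⁻¹ = conjDiagonal n a b c := by
  rw [P3_inv, Matrix.diagonal_fin_three]
  ext i j
  fin_cases i <;> fin_cases j <;>
    simp [P3, conjDiagonal, sub_mul, neg_add_eq_sub, mul_comm]

lemma mem_conj_CartanC_iff (n : ℕ) (M : Matrix (Fin 3) (Fin 3) ℝ) :
    M ∈ (fun M => P3 n * M * (P3 n)⁻¹) '' CartanC ↔
      ∃ a b : ℝ, 0 < a ∧ 0 < b ∧ M = conjDiagonal n a b (1 / (a * b)) := by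
  constructor
  · rintro ⟨_, ⟨a, b, ha, hb, rfl⟩, rfl⟩
    exact ⟨a, b, ha, hb, P3_mul_diagonal_mul_inv n a b _⟩
  · rintro ⟨a, b, ha, hb, rfl⟩
    exact ⟨_, ⟨a, b, ha, hb, rfl⟩, P3_mul_diagonal_mul_inv n a b _⟩

section

open Real

lemma tendsto_nat_mul_exp_div_sub_one (w : ℝ) :
    Tendsto (fun n : ℕ => (n : ℝ) * (exp (w / n) - 1)) atTop (𝓝 w) := by
  have hderiv : HasDerivAt (fun x => exp (w * x)) w 0 := by
    simpa using ((hasDerivAt_id (0 : ℝ)).const_mul w).exp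
  have hinv : Tendsto (fun n : ℕ => (n : ℝ)⁻¹) atTop (𝓝[≠] 0) :=
    tendsto_nhdsWithin_of_tendsto_nhds_of_eventually_within _
      tendsto_inv_atTop_nhds_zero_nat
      ((eventually_ne_atTop 0).mono fun n hn => by simpa using hn)
  refine ((hasDerivAt_iff_tendsto_slope.1 hderiv).comp hinv).congr' ?_
  filter_upwards [eventually_ne_atTop 0] with n hn
  simp only [Function.comp_apply, slope_def_field, mul_zero, exp_zero, sub_zero, div_eq_mul_inv,
    inv_inv]
  ring

lemma tendsto_zero_of_tendsto_mul_atTop {ι : Type*} {L : Filter ι} {x f : ι → ℝ} {T : ℝ}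
    (hx : Tendsto x L atTop) (hxf : Tendsto (fun k => x k * f k) L (𝓝 T)) :
    Tendsto f L (𝓝 0) :=
  (hxf.div_atTop hx).congr' <| (hx.eventually_gt_atTop 0).mono fun k hk => by
    field_simp

lemma tendsto_conjDiagonal_exp (α β γ : ℝ) :
    Tendsto (fun n : ℕ => conjDiagonal n (exp (α / n)) (exp (β / n)) (exp (γ / n))) atTop
      (𝓝 !![1, 0, γ - α; 0, 1, γ - β; 0, 0, 1]) := by
  have hexp (w : ℝ) : Tendsto (fun n : ℕ => exp (w / n)) atTop (𝓝 1) := by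
    simpa using (tendsto_const_div_atTop_nhds_zero_nat w).rexp
  have hmul (w w' : ℝ) :
      Tendsto (fun n : ℕ => (n : ℝ) * (exp (w / n) - exp (w' / n))) atTop (𝓝 (w - w')) :=
    ((tendsto_nat_mul_exp_div_sub_one w).sub (tendsto_nat_mul_exp_div_sub_one w')).congr
      fun n => by ring
  refine tendsto_pi_nhds.2 fun i => tendsto_pi_nhds.2 fun j => ?_
  fin_cases i <;> fin_cases j <;> simp [conjDiagonal, hexp, hmul]

end

lemma mem_groupN3_of_tendsto_conjDiagonal {ι : Type*} {L : Filter ι} [L.NeBot]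
    {x a b c : ι → ℝ} {M : Matrix (Fin 3) (Fin 3) ℝ} (hx : Tendsto x L atTop)
    (habc : ∀ k, a k * b k * c k = 1)
    (hM : Tendsto (fun k => conjDiagonal (x k) (a k) (b k) (c k)) L (𝓝 M)) :
    M ∈ groupN3 := by
  have hentry (i j : Fin 3) :
      Tendsto (fun k => conjDiagonal (x k) (a k) (b k) (c k) i j) L (𝓝 (M i j)) :=
    tendsto_pi_nhds.1 (tendsto_pi_nhds.1 hM i) j
  have hzero (i j : Fin 3) (hij : ∀ k, conjDiagonal (x k) (a k) (b k) (c k) i j = 0) :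
      M i j = 0 :=
    tendsto_nhds_unique ((hentry i j).congr hij) tendsto_const_nhds
  have ha : Tendsto a L (𝓝 (M 0 0)) := by simpa [conjDiagonal] using hentry 0 0
  have hb : Tendsto b L (𝓝 (M 1 1)) := by simpa [conjDiagonal] using hentry 1 1
  have hc : Tendsto c L (𝓝 (M 2 2)) := by simpa [conjDiagonal] using hentry 2 2
  -- `x (c - a)` and `x (c - b)` converge while `x → ∞`, so `c - a → 0` and `c - b → 0`
  have hca : M 2 2 = M 0 0 := sub_eq_zero.1 <| tendsto_nhds_unique (hc.sub ha)
    (tendsto_zero_of_tendsto_mul_atTop hx (by simpa [conjDiagonal] using hentry 0 2))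
  have hcb : M 2 2 = M 1 1 := sub_eq_zero.1 <| tendsto_nhds_unique (hc.sub hb)
    (tendsto_zero_of_tendsto_mul_atTop hx (by simpa [conjDiagonal] using hentry 1 2))
  have hprod : M 0 0 * M 1 1 * M 2 2 = 1 :=
    tendsto_nhds_unique ((ha.mul hb).mul hc) (tendsto_const_nhds.congr fun k => (habc k).symm)
  have h22 : M 2 2 = 1 :=
    (Odd.pow_inj (n := 3) (by decide)).1 (by rw [one_pow, ← hprod, ← hca, ← hcb]; ring)
  refine ⟨M 1 2, M 0 2, ?_⟩
  ext i j
  fin_cases i <;> fin_cases j <;> simp [hzero, conjDiagonal, h22, ← hca, ← hcb]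

/-- `P_n C P_n⁻¹` converges to the group `N₃`. -/
theorem cartan_conj_converges_to_N3 :
    SubgroupConverges
      (fun n => (fun M => P3 n * M * (P3 n)⁻¹) '' CartanC) groupN3 := by
  refine ⟨?_, ?_⟩
  · rintro _ ⟨s, t, rfl⟩
    obtain ⟨γ, hγ⟩ : ∃ γ, 3 * γ = s + t := ⟨(s + t) / 3, by ring⟩
    have hdet (n : ℕ) :
        Real.exp (γ / n) = 1 / (Real.exp ((γ - t) / n) * Real.exp ((γ - s) / n)) := by
      rw [one_div, ← Real.exp_add, ← Real.exp_neg]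
      congr 1
      linear_combination (1 / (n : ℝ)) * hγ
    refine ⟨fun n => conjDiagonal n (Real.exp ((γ - t) / n)) (Real.exp ((γ - s) / n))
        (Real.exp (γ / n)),
      fun n => (mem_conj_CartanC_iff n _).2
        ⟨_, _, Real.exp_pos _, Real.exp_pos _, by rw [← hdet]⟩, ?_⟩
    simpa using tendsto_conjDiagonal_exp (γ - t) (γ - s) γ
  · intro h hh φ hφ M hM
    choose a b ha hb hab using fun n => (mem_conj_CartanC_iff n (h n)).1 (hh n)
    refine mem_groupN3_of_tendsto_conjDiagonal
      (tendsto_natCast_atTop_atTop.comp hφ.tendsto_atTop)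
      (fun k => mul_one_div_cancel (mul_pos (ha (φ k)) (hb (φ k))).ne') ?_
    simpa [Function.comp_def, hab] using hM
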